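/- For index sets C_1, C_2 with nonempty intersection S = C_1 ∩ C_2 and with P(X_S) everywhere positive on its support appropriately, the KL divergence between P(X_{C_1∪C_2}) and the junction tree distribution P_J(x) = P(x_{C_1})·P(x_{C_2})/P(x_S) equals I(X_{C_1∪C_2}) − [I(X_{C_1}) + I(X_{C_2}) − I(X_{C_1∩C_2})], and this quantity is nonnegative. -/

import Mathlib

open Real Finset

/-- Shannon entropy of a (probability mass) function on a finite type. -/
noncomputable def entH {α : Type*} [Fintype α] (q : α → ℝ) : ℝ :=
  ∑ x, Real.negMulLog (q x)

/-- Marginal of `p` on the coordinate set `A`. -/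
noncomputable def marg {V Λ : Type*} [Fintype V] [DecidableEq V] [Fintype Λ] [DecidableEq Λ]
    (p : (V → Λ) → ℝ) (A : Finset V) : (A → Λ) → ℝ :=
  fun y => ∑ x : V → Λ, if ∀ i : A, x i.1 = y i then p x else 0

/-- Marginal probability of the `A`-part of the full realization `x`. -/
noncomputable def margAt {V Λ : Type*} [Fintype V] [DecidableEq V] [Fintype Λ] [DecidableEq Λ]
    (p : (V → Λ) → ℝ) (A : Finset V) (x : V → Λ) : ℝ :=
  marg p A (fun i => x i.1)

/-- Information content `I(X_A) = ∑_{i∈A} H(X_i) − H(X_A)`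
(this formula automatically gives `0` when `|A| < 2`). -/
noncomputable def info {V Λ : Type*} [Fintype V] [DecidableEq V] [Fintype Λ] [DecidableEq Λ]
    (p : (V → Λ) → ℝ) (A : Finset V) : ℝ :=
  (∑ i ∈ A, entH (marg p {i})) - entH (marg p A)

/-- Kullback–Leibler divergence. -/
noncomputable def KL {α : Type*} [Fintype α] (q r : α → ℝ) : ℝ :=
  ∑ x, q x * Real.log (q x / r x)

/-! Pulled back to full configurations, `log (P(x_{C₁∪C₂}) / P_J(x))` splits into four
log-marginals whose `p`-expectations are negated entropies; the singleton entropies in the `I`'s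
cancel by inclusion–exclusion over `C₁ ∪ C₂` and `C₁ ∩ C₂`. Nonnegativity is Gibbs' inequality in
the form `q log (q / r) ≥ q - r`, which only needs `P_J` to carry no more mass than `p`: summing
`P(x_{C₂})` over the extensions of a configuration `z` on `C₁` gives `P(z_S)`, so the mass of `P_J`
is that of `P(X_{C₁})` off the null set of the separator. -/

section Restriction

variable {V Λ : Type*} [DecidableEq V]

lemma restrict_union_eq_iff {A B : Finset V} (y : (A ∪ B : Finset V) → Λ) (z : A → Λ)
    (x : V → Λ) :
    ((fun i : A => y ⟨i, mem_union_left B i.2⟩) = z ∧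
        (fun i : B => y ⟨i, mem_union_right A i.2⟩) = B.restrict x) ↔
      ((fun i : (A ∩ B : Finset V) => z ⟨i, mem_of_mem_inter_left i.2⟩) = (A ∩ B).restrict x ∧
        y = fun i : (A ∪ B : Finset V) => if h : i.1 ∈ A then z ⟨i, h⟩ else x i) := by
  constructor
  · rintro ⟨rfl, hB⟩
    refine ⟨funext fun i => congrFun hB ⟨i, (mem_inter.1 i.2).2⟩, funext fun i => ?_⟩
    split_ifs with h
    · rfl
    · exact congrFun hB ⟨i, (mem_union.1 i.2).resolve_left h⟩
  · rintro ⟨hS, rfl⟩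
    refine ⟨funext fun i => dif_pos i.2, funext fun i => ?_⟩
    by_cases h : i.1 ∈ A
    · exact (dif_pos h).trans (congrFun hS ⟨i, mem_inter.2 ⟨h, i.2⟩⟩)
    · exact dif_neg h

end Restriction

section Marginals

variable {V Λ : Type*} [Fintype V] [DecidableEq V] [Fintype Λ] [DecidableEq Λ]
  (p : (V → Λ) → ℝ)

lemma marg_eq_sum_ite (A : Finset V) (y : A → Λ) :
    marg p A y = ∑ x, if A.restrict x = y then p x else 0 := by
  simp only [marg, funext_iff, restrict]

lemma sum_marg_mul (A : Finset V) (g : (A → Λ) → ℝ) :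
    ∑ y, marg p A y * g y = ∑ x, p x * g (A.restrict x) := by
  simp_rw [marg_eq_sum_ite, sum_mul, ite_mul, zero_mul]
  rw [sum_comm]
  simp only [sum_ite_eq, mem_univ, if_true]

lemma sum_marg (A : Finset V) : ∑ y, marg p A y = ∑ x, p x := by
  simpa using sum_marg_mul p A 1

lemma entH_marg (A : Finset V) :
    entH (marg p A) = -∑ x, p x * log (margAt p A x) := by
  simp_rw [entH, negMulLog, neg_mul, sum_neg_distrib,
    sum_marg_mul p A (fun y => log (marg p A y))]
  rfl

lemma sum_marg_fiber_eq_marg_inter (A B : Finset V) (z : A → Λ) :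
    ∑ y : (A ∪ B : Finset V) → Λ with (fun i : A => y ⟨i, mem_union_left B i.2⟩) = z,
        marg p B (fun i => y ⟨i, mem_union_right A i.2⟩) =
      marg p (A ∩ B) (fun i => z ⟨i, mem_of_mem_inter_left i.2⟩) := by
  simp_rw [marg_eq_sum_ite]
  rw [sum_comm]
  refine sum_congr rfl fun x _ => ?_
  simp_rw [sum_filter, ← ite_and, eq_comm (a := B.restrict x), restrict_union_eq_iff,
    eq_comm (a := (A ∩ B).restrict x), ite_and]
  simp only [sum_ite_irrel, sum_ite_eq', mem_univ, if_true, sum_const_zero]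

variable {p} (hp : ∀ x, 0 ≤ p x)
include hp

lemma marg_nonneg (A : Finset V) (y : A → Λ) : 0 ≤ marg p A y :=
  sum_nonneg fun x _ => by split <;> simp [hp x]

lemma le_margAt (A : Finset V) (x : V → Λ) : p x ≤ margAt p A x := by
  have h := single_le_sum (f := fun x' => if A.restrict x' = A.restrict x then p x' else 0)
    (fun x' _ => by split <;> simp [hp x']) (mem_univ x)
  rw [if_pos rfl] at h
  rwa [margAt, marg_eq_sum_ite]

lemma marg_le_marg_restrict {A B : Finset V} (h : A ⊆ B) (y : B → Λ) :
    marg p B y ≤ marg p A (fun i => y ⟨i, h i.2⟩) := by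
  simp_rw [marg_eq_sum_ite]
  refine sum_le_sum fun x _ => ?_
  by_cases hx : B.restrict x = y
  · rw [if_pos hx, if_pos (hx ▸ rfl)]
  · rw [if_neg hx]; split <;> simp [hp x]

lemma marg_eq_zero_of_restrict {A B : Finset V} (h : A ⊆ B) {y : B → Λ}
    (hy : marg p A (fun i => y ⟨i, h i.2⟩) = 0) : marg p B y = 0 :=
  le_antisymm (hy ▸ marg_le_marg_restrict hp h y) (marg_nonneg hp B y)

end Marginals

lemma sub_le_mul_log_div {q r : ℝ} (hq : 0 ≤ q) (hr : 0 ≤ r) (hqr : r = 0 → q = 0) :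
    q - r ≤ q * log (q / r) := by
  rcases hr.eq_or_lt with rfl | hr
  · simp [hqr rfl]
  · calc q - r = r * (q / r - 1) := by field_simp
      _ ≤ r * (q / r * log (q / r)) :=
          mul_le_mul_of_nonneg_left (self_sub_one_le_mul_log (div_nonneg hq hr.le)) hr.le
      _ = q * log (q / r) := by field_simp

lemma KL_nonneg_of_sum_le {α : Type*} [Fintype α] {q r : α → ℝ} (hq : ∀ x, 0 ≤ q x)
    (hr : ∀ x, 0 ≤ r x) (hqr : ∀ x, r x = 0 → q x = 0) (hsum : ∑ x, r x ≤ ∑ x, q x) :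
    0 ≤ KL q r := by
  have h := sum_le_sum fun x (_ : x ∈ univ) => sub_le_mul_log_div (hq x) (hr x) (hqr x)
  rw [sum_sub_distrib] at h
  exact (sub_nonneg.2 hsum).trans h

section Junction

variable {V Λ : Type*} [Fintype V] [DecidableEq V] [Fintype Λ] [DecidableEq Λ]
  (p : (V → Λ) → ℝ) (C1 C2 : Finset V)

noncomputable def junction (y : (C1 ∪ C2 : Finset V) → Λ) : ℝ :=
  if marg p (C1 ∩ C2) (fun i => y ⟨i, mem_union_left C2 (mem_of_mem_inter_left i.2)⟩) = 0 then 0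
  else marg p C1 (fun i => y ⟨i, mem_union_left C2 i.2⟩) *
    marg p C2 (fun i => y ⟨i, mem_union_right C1 i.2⟩) /
    marg p (C1 ∩ C2) (fun i => y ⟨i, mem_union_left C2 (mem_of_mem_inter_left i.2)⟩)

variable {p} (hp : ∀ x, 0 ≤ p x)
include hp

lemma junction_nonneg (y : (C1 ∪ C2 : Finset V) → Λ) : 0 ≤ junction p C1 C2 y := by
  unfold junction
  split
  · exact le_rfl
  · exact div_nonneg (mul_nonneg (marg_nonneg hp _ _) (marg_nonneg hp _ _)) (marg_nonneg hp _ _)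

lemma marg_eq_zero_of_junction_eq_zero {y : (C1 ∪ C2 : Finset V) → Λ}
    (hy : junction p C1 C2 y = 0) : marg p (C1 ∪ C2) y = 0 := by
  unfold junction at hy
  split_ifs at hy with hS
  · exact marg_eq_zero_of_restrict hp (inter_subset_left.trans subset_union_left) hS
  · rcases mul_eq_zero.1 ((div_eq_zero_iff.1 hy).resolve_right hS) with h1 | h2
    · exact marg_eq_zero_of_restrict hp subset_union_left h1
    · exact marg_eq_zero_of_restrict hp subset_union_right h2

lemma sum_junction_le : ∑ y, junction p C1 C2 y ≤ ∑ x, p x := by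
  calc ∑ y, junction p C1 C2 y
      = ∑ z : C1 → Λ, ∑ y with (fun i : C1 => y ⟨i, mem_union_left C2 i.2⟩) = z,
          junction p C1 C2 y := (sum_fiberwise _ _ _).symm
    _ = ∑ z : C1 → Λ,
          if marg p (C1 ∩ C2) (fun i => z ⟨i, mem_of_mem_inter_left i.2⟩) = 0 then 0
          else marg p C1 z := by
        refine sum_congr rfl fun z _ => ?_
        have hfib : ∀ y ∈ ({y | (fun i : C1 => y ⟨i, mem_union_left C2 i.2⟩) = z} : Finset _),
            junction p C1 C2 y =
              if marg p (C1 ∩ C2) (fun i => z ⟨i, mem_of_mem_inter_left i.2⟩) = 0 then 0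
              else marg p C1 z / marg p (C1 ∩ C2) (fun i => z ⟨i, mem_of_mem_inter_left i.2⟩) *
                marg p C2 (fun i => y ⟨i, mem_union_right C1 i.2⟩) := by
          intro y hy
          obtain rfl := (mem_filter.1 hy).2
          exact if_congr Iff.rfl rfl (by ring)
        rw [sum_congr rfl hfib]
        split_ifs with hₛ
        · exact sum_const_zero
        · rw [← mul_sum, sum_marg_fiber_eq_marg_inter, div_mul_cancel₀ _ hₛ]
    _ ≤ ∑ z : C1 → Λ, marg p C1 z :=
        sum_le_sum fun z _ => by split_ifs <;> simp [marg_nonneg hp]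
    _ = ∑ x, p x := sum_marg p C1

lemma log_div_junction_restrict {x : V → Λ} (hx : 0 < p x) :
    log (margAt p (C1 ∪ C2) x / junction p C1 C2 ((C1 ∪ C2).restrict x)) =
      log (margAt p (C1 ∪ C2) x) - log (margAt p C1 x) - log (margAt p C2 x) +
        log (margAt p (C1 ∩ C2) x) := by
  have hU := hx.trans_le (le_margAt hp (C1 ∪ C2) x)
  have h1 := hx.trans_le (le_margAt hp C1 x)
  have h2 := hx.trans_le (le_margAt hp C2 x)
  have hS := hx.trans_le (le_margAt hp (C1 ∩ C2) x)
  change log (margAt p (C1 ∪ C2) x / if margAt p (C1 ∩ C2) x = 0 then 0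
    else margAt p C1 x * margAt p C2 x / margAt p (C1 ∩ C2) x) = _
  rw [if_neg hS.ne', log_div hU.ne' (div_pos (mul_pos h1 h2) hS).ne',
    log_div (mul_pos h1 h2).ne' hS.ne', log_mul h1.ne' h2.ne']
  ring

lemma KL_marg_junction :
    KL (marg p (C1 ∪ C2)) (junction p C1 C2) =
      entH (marg p C1) + entH (marg p C2) - entH (marg p (C1 ∩ C2)) - entH (marg p (C1 ∪ C2)) := by
  have hterm : ∀ x, p x * log (margAt p (C1 ∪ C2) x / junction p C1 C2 ((C1 ∪ C2).restrict x)) =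
      p x * log (margAt p (C1 ∪ C2) x) - p x * log (margAt p C1 x) -
        p x * log (margAt p C2 x) + p x * log (margAt p (C1 ∩ C2) x) := by
    intro x
    rcases (hp x).eq_or_lt with h | h
    · simp [← h]
    · rw [log_div_junction_restrict C1 C2 hp h]
      ring
  rw [KL, sum_marg_mul p _ fun y => log (marg p (C1 ∪ C2) y / junction p C1 C2 y)]
  refine (sum_congr rfl fun x _ => hterm x).trans ?_
  simp only [sum_add_distrib, sum_sub_distrib, entH_marg]
  ring

end Junction

theorem kl_junction_two_clusters_general {V Λ : Type*} [Fintype V] [DecidableEq V] [Fintype Λ] [DecidableEq Λ]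
    (p : (V → Λ) → ℝ) (hp : ∀ x, 0 ≤ p x)
    (C1 C2 : Finset V) :
    KL (marg p (C1 ∪ C2))
      (fun y : ((C1 ∪ C2 : Finset V) → Λ) =>
        if marg p (C1 ∩ C2)
            (fun i => y ⟨i.1, Finset.mem_union_left C2 (Finset.mem_of_mem_inter_left i.2)⟩) = 0
        then 0
        else
          marg p C1 (fun i => y ⟨i.1, Finset.mem_union_left C2 i.2⟩) *
          marg p C2 (fun i => y ⟨i.1, Finset.mem_union_right C1 i.2⟩) /
          marg p (C1 ∩ C2)
            (fun i => y ⟨i.1, Finset.mem_union_left C2 (Finset.mem_of_mem_inter_left i.2)⟩))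
      = info p (C1 ∪ C2) - (info p C1 + info p C2 - info p (C1 ∩ C2))
    ∧ 0 ≤ info p (C1 ∪ C2) - (info p C1 + info p C2 - info p (C1 ∩ C2)) := by
  have hinfo : info p (C1 ∪ C2) - (info p C1 + info p C2 - info p (C1 ∩ C2)) =
      entH (marg p C1) + entH (marg p C2) - entH (marg p (C1 ∩ C2)) - entH (marg p (C1 ∪ C2)) := by
    have := sum_union_inter (s₁ := C1) (s₂ := C2) (f := fun i => entH (marg p {i}))
    unfold info
    linarith
  change KL _ (junction p C1 C2) = _ ∧ _
  rw [hinfo, ← KL_marg_junction C1 C2 hp]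
  refine ⟨rfl, KL_nonneg_of_sum_le (marg_nonneg hp _) (junction_nonneg C1 C2 hp)
    (fun _ => marg_eq_zero_of_junction_eq_zero C1 C2 hp) ?_⟩
  rw [sum_marg]
  exact sum_junction_le C1 C2 hp

/-- for index sets with nonempty intersection `S = C₁ ∩ C₂`, the KL
divergence between `P(X_{C₁∪C₂})` and the two-cluster junction tree distribution
`P_J = P(x_{C₁})·P(x_{C₂})/P(x_S)` equals
`I(X_{C₁∪C₂}) − [I(X_{C₁}) + I(X_{C₂}) − I(X_{C₁∩C₂})]`, and this is nonnegative. -/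
theorem kl_junction_two_clusters {V Λ : Type*} [Fintype V] [DecidableEq V] [Fintype Λ] [DecidableEq Λ]
    (p : (V → Λ) → ℝ) (hp : ∀ x, 0 ≤ p x) (hsum : ∑ x, p x = 1)
    (C1 C2 : Finset V) (hne : (C1 ∩ C2).Nonempty) :
    KL (marg p (C1 ∪ C2))
      (fun y : ((C1 ∪ C2 : Finset V) → Λ) =>
        if marg p (C1 ∩ C2)
            (fun i => y ⟨i.1, Finset.mem_union_left C2 (Finset.mem_of_mem_inter_left i.2)⟩) = 0
        then 0
        else
          marg p C1 (fun i => y ⟨i.1, Finset.mem_union_left C2 i.2⟩) *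
          marg p C2 (fun i => y ⟨i.1, Finset.mem_union_right C1 i.2⟩) /
          marg p (C1 ∩ C2)
            (fun i => y ⟨i.1, Finset.mem_union_left C2 (Finset.mem_of_mem_inter_left i.2)⟩))
      = info p (C1 ∪ C2) - (info p C1 + info p C2 - info p (C1 ∩ C2))
    ∧ 0 ≤ info p (C1 ∪ C2) - (info p C1 + info p C2 - info p (C1 ∩ C2)) :=
  kl_junction_two_clusters_general p hp C1 C2
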